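/- In the graphical construction of the multiplicative coalescent with linear deletion: for every t ≥ 0, almost surely every connected component of G_t contains only finitely many vertices i with λ_i ≤ t·m_i (i.e., each component is struck by only finitely many lightnings up to time t). -/

import Mathlib

open MeasureTheory ProbabilityTheory Filter
open scoped ENNReal

/-- The (real-valued) total weight of the connected component `C` of `G`. -/
noncomputable def compW {V : Type*} (x : V → ℝ) (G : SimpleGraph V)
    (C : G.ConnectedComponent) : ℝ :=
  ∑' v : {v : V // G.connectedComponentMk v = C}, x v

/-- The (extended-real-valued) total weight of the connected component `C` of `G`. -/
noncomputable def compWE {V : Type*} (x : V → ℝ) (G : SimpleGraph V)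
    (C : G.ConnectedComponent) : ℝ≥0∞ :=
  ∑' v : {v : V // G.connectedComponentMk v = C}, ENNReal.ofReal (x v)

/-- `S₂^G`: the sum of the squared component weights of `G` (with weights `x`). -/
noncomputable def S2E {V : Type*} (x : V → ℝ) (G : SimpleGraph V) : ℝ≥0∞ :=
  ∑' C : G.ConnectedComponent, compWE x G C ^ 2

/-- The decreasing rearrangement of a nonnegative family `w`: `ordOf w n` is the
`n`-th largest value (counted from `n = 0`). -/
noncomputable def ordOf {α : Type*} (w : α → ℝ) (n : ℕ) : ℝ :=
  sInf {r : ℝ | 0 ≤ r ∧ {a : α | r < w a}.Finite ∧ Nat.card {a : α | r < w a} ≤ n}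

/-- `ord(x, G)`: the decreasing rearrangement of the component weights of `G`. -/
noncomputable def ordSeq {V : Type*} (x : V → ℝ) (G : SimpleGraph V) : ℕ → ℝ :=
  ordOf (compW x G)

/-- The `ℓ₂` distance between two sequences. -/
noncomputable def l2dist (m m' : ℕ → ℝ) : ℝ :=
  Real.sqrt (∑' n, (m n - m' n) ^ 2)

/-- The `ℓ₂` distance between two sequences, with values in `ℝ≥0∞`. -/
noncomputable def l2edist (m m' : ℕ → ℝ) : ℝ≥0∞ :=
  (∑' n, ENNReal.ofReal ((m n - m' n) ^ 2)) ^ (2⁻¹ : ℝ)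

/-- The graphical-construction random graph on `ℕ`: the edge `{i,j}` is present
iff `ξ_{i,j} ≤ t·m_i·m_j`. -/
noncomputable def expGraph {Ω : Type*} (ξ : ℕ → ℕ → Ω → ℝ) (m : ℕ → ℝ) (t : ℝ)
    (ω : Ω) : SimpleGraph ℕ :=
  SimpleGraph.fromRel (fun i j => ξ (min i j) (max i j) ω ≤ t * m i * m j)

/-!
Fix a vertex `k` and a finite set `s ∋ k` of vertices outside of which `t ∑ m_x² ≤ 1/2`.
If a vertex `i ∉ s` is connected to `k` and struck by lightning, then a path from `i` to `k`,
stopped at its first vertex in `s`, is a self-avoiding path through `sᶜ`; the presence of its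
edges and the lightning at `i` are independent events of probabilities at most `t m_a m_b` and
`λ t m_i`. Summing over all such paths gives a geometric series, so that
`P(i ~ k, i struck) ≤ C m_i²`. This is summable, and Borel–Cantelli shows that almost surely
only finitely many struck vertices are connected to `k`.
-/

lemma measure_le_le_of_measure_gt_eq_exp {Ω : Type*} [MeasurableSpace Ω] {μ : Measure Ω}
    [IsProbabilityMeasure μ] {X : Ω → ℝ} (hX : Measurable X) {s a : ℝ} (ha : 0 ≤ a)
    (h : μ {ω | s < X ω} = ENNReal.ofReal (Real.exp (-a))) :
    μ {ω | X ω ≤ s} ≤ ENNReal.ofReal a := by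
  have hcompl : {ω | X ω ≤ s}ᶜ = {ω | s < X ω} := by ext; simp
  rw [← compl_compl {ω | X ω ≤ s},
    prob_compl_eq_one_sub (measurableSet_le hX measurable_const).compl, hcompl, h,
    tsub_le_iff_right, ← ENNReal.ofReal_add ha (Real.exp_nonneg _)]
  exact ENNReal.one_le_ofReal.2 (by linarith [Real.add_one_le_exp (-a)])

lemma exists_finset_mul_tsum_compl_lt {α : Type*} {f : α → ℝ≥0∞} (hf : ∑' x, f x ≠ ∞)
    {c ε : ℝ≥0∞} (hc : c ≠ ∞) (hε : 0 < ε) (s₀ : Finset α) :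
    ∃ s : Finset α, s₀ ⊆ s ∧ c * ∑' x, (↑s : Set α)ᶜ.indicator f x < ε := by
  have h := ENNReal.Tendsto.const_mul (ENNReal.tendsto_tsum_compl_atTop_zero hf) (Or.inr hc)
  rw [mul_zero] at h
  obtain ⟨s, hs, hlt⟩ := ((eventually_ge_atTop s₀).and (h.eventually_lt_const hε)).exists
  exact ⟨s, hs, by rwa [← tsum_subtype]⟩

section ExitPaths

variable {V : Type*}

def IsExitPath (S : Set V) {n : ℕ} (v : Fin (n + 1) → V) : Prop :=
  (∀ l : Fin n, v l.castSucc ∈ S) ∧ v (Fin.last n) ∉ S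

lemma SimpleGraph.Reachable.exists_exitPath {G : SimpleGraph V} {S : Set V} {i k : V}
    (h : G.Reachable i k) (hk : k ∉ S) :
    ∃ (n : ℕ) (v : Fin (n + 1) → V), v 0 = i ∧ Function.Injective v ∧ IsExitPath S v ∧
      ∀ l : Fin n, G.Adj (v l.castSucc) (v l.succ) := by
  classical
  obtain ⟨q⟩ := h
  set p := q.bypass
  have hp : p.IsPath := q.bypass_isPath
  have hexit : ∃ j, p.getVert j ∉ S := ⟨p.length, by simpa using hk⟩
  have hle : Nat.find hexit ≤ p.length := Nat.find_min' hexit (by simpa using hk)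
  refine ⟨Nat.find hexit, fun l => p.getVert l, by simp, fun l l' hll' => ?_,
    ⟨fun l => ?_, by simpa using Nat.find_spec hexit⟩, fun l => ?_⟩
  · have := l.isLt; have := l'.isLt
    exact Fin.ext (hp.getVert_injOn (by simp; omega) (by simp; omega) hll')
  · exact not_not.1 (Nat.find_min hexit (by rw [Fin.val_castSucc]; exact l.isLt))
  · have := l.isLt
    simpa using p.adj_getVert_succ (i := l) (by omega)

noncomputable def pathWeight (w : V → V → ℝ≥0∞) {n : ℕ} (v : Fin (n + 1) → V) : ℝ≥0∞ :=
  ∏ l : Fin n, w (v l.castSucc) (v l.succ)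

lemma pathWeight_cons (w : V → V → ℝ≥0∞) {n : ℕ} (a : V) (u : Fin (n + 1) → V) :
    pathWeight w (Fin.cons a u) = w a (u 0) * pathWeight w u := by
  simp [pathWeight, Fin.prod_univ_succ]

lemma isExitPath_cons {S : Set V} {n : ℕ} (a : V) (u : Fin (n + 1) → V) :
    IsExitPath S (Fin.cons a u) ↔ a ∈ S ∧ IsExitPath S u := by
  simp [IsExitPath, Fin.forall_fin_succ, and_assoc]

open Classical in
noncomputable def exitPathSum (S : Set V) (w : V → V → ℝ≥0∞) (n : ℕ) (i : V) : ℝ≥0∞ :=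
  ∑' u : Fin n → V,
    if IsExitPath S (Fin.cons i u : Fin (n + 1) → V) then pathWeight w (Fin.cons i u) else 0

lemma exitPathSum_zero (S : Set V) (w : V → V → ℝ≥0∞) (i : V) :
    exitPathSum S w 0 i = Sᶜ.indicator 1 i := by
  rw [exitPathSum, (hasSum_unique _).tsum_eq]
  by_cases hi : i ∈ S <;> simp [hi, IsExitPath, pathWeight]

lemma exitPathSum_succ (S : Set V) (w : V → V → ℝ≥0∞) (n : ℕ) (i : V) :
    exitPathSum S w (n + 1) i =
      S.indicator (fun i => ∑' x, w i x * exitPathSum S w n x) i := by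
  rw [exitPathSum, ← (Fin.consEquiv fun _ => V).tsum_eq, ENNReal.tsum_prod']
  by_cases hi : i ∈ S
  · simp only [Set.indicator_of_mem hi, exitPathSum, ← ENNReal.tsum_mul_left]
    refine tsum_congr fun x => tsum_congr fun u => ?_
    by_cases h : IsExitPath S (Fin.cons x u : Fin (n + 1) → V) <;>
      simp [Fin.consEquiv, isExitPath_cons, pathWeight_cons, h, hi]
  · simp [Fin.consEquiv, isExitPath_cons, hi]

lemma exitPathSum_succ_rankOne (S : Set V) (c : ℝ≥0∞) (e : V → ℝ≥0∞) (n : ℕ) (i : V) :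
    exitPathSum S (fun a b => c * e a * e b) (n + 1) i =
      S.indicator e i * (c * ∑' x, Sᶜ.indicator e x) *
        (c * ∑' x, S.indicator (fun x => e x ^ 2) x) ^ n := by
  set A := ∑' x, Sᶜ.indicator e x
  set D := c * ∑' x, S.indicator (fun x => e x ^ 2) x
  induction n generalizing i with
  | zero =>
    by_cases hi : i ∈ S
    · simp only [exitPathSum_succ, exitPathSum_zero, Set.indicator_of_mem hi, pow_zero, mul_one,
        A, ← ENNReal.tsum_mul_left]
      refine tsum_congr fun x => ?_
      by_cases hx : x ∈ S
      · simp [hx]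
      · simp [hx]; ring
    · simp [exitPathSum_succ, hi]
  | succ n ih =>
    by_cases hi : i ∈ S
    · have hsq : ∀ x, e x * S.indicator e x = S.indicator (fun x => e x ^ 2) x := fun x => by
        by_cases hx : x ∈ S <;> simp [hx, sq]
      rw [exitPathSum_succ, Set.indicator_of_mem hi]
      calc ∑' x, c * e i * e x * exitPathSum S (fun a b => c * e a * e b) (n + 1) x
          = ∑' x, e i * (c * A) * D ^ n * (c * (e x * S.indicator e x)) := by
            simp only [ih]; exact tsum_congr fun x => by ring
        _ = S.indicator e i * (c * A) * D ^ (n + 1) := by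
            simp only [hsq, ENNReal.tsum_mul_left, Set.indicator_of_mem hi, D, pow_succ]
            ring
    · simp [exitPathSum_succ, hi]

lemma tsum_exitPathSum_rankOne_le {S : Set V} {c : ℝ≥0∞} {e : V → ℝ≥0∞}
    (hD : c * ∑' x, S.indicator (fun x => e x ^ 2) x ≤ 2⁻¹) {i : V} (hi : i ∈ S) :
    ∑' n, exitPathSum S (fun a b => c * e a * e b) n i ≤
      2 * (c * ∑' x, Sᶜ.indicator e x) * e i := by
  rw [tsum_eq_zero_add' ENNReal.summable, exitPathSum_zero,
    Set.indicator_of_notMem (Set.notMem_compl_iff.2 hi), zero_add]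
  simp only [exitPathSum_succ_rankOne, Set.indicator_of_mem hi, ENNReal.tsum_mul_left]
  calc _ ≤ e i * (c * ∑' x, Sᶜ.indicator e x) * ∑' n : ℕ, (2⁻¹ : ℝ≥0∞) ^ n :=
        by gcongr
    _ = _ := by rw [ENNReal.tsum_geometric, ENNReal.one_sub_inv_two, inv_inv]; ring

end ExitPaths

lemma expGraph_adj_iff {Ω : Type*} {ξ : ℕ → ℕ → Ω → ℝ} {m : ℕ → ℝ} {t : ℝ} {ω : Ω} {a b : ℕ} :
    (expGraph ξ m t ω).Adj a b ↔ a ≠ b ∧ ξ (min a b) (max a b) ω ≤ t * m a * m b := by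
  rw [expGraph, SimpleGraph.fromRel_adj, min_comm b, max_comm b, mul_right_comm t (m b), or_self]

section Model

variable {Ω : Type*} [MeasurableSpace Ω] {μ : Measure Ω} [IsProbabilityMeasure μ] {m : ℕ → ℝ}
  {lam : ℝ} {ξ : ℕ → ℕ → Ω → ℝ} {lv : ℕ → Ω → ℝ} {t : ℝ}

lemma measure_edge_le (hpos : ∀ i, 0 ≤ m i) (ht : 0 ≤ t)
    (hmeasξ : ∀ i j, Measurable (ξ i j))
    (hlawξ : ∀ i j, i < j → ∀ s : ℝ, 0 ≤ s →
      μ {ω | s < ξ i j ω} = ENNReal.ofReal (Real.exp (-s)))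
    {a b : ℕ} (hab : a ≠ b) :
    μ {ω | ξ (min a b) (max a b) ω ≤ t * m a * m b} ≤
      ENNReal.ofReal t * ENNReal.ofReal (m a) * ENNReal.ofReal (m b) := by
  have hnn : 0 ≤ t * m a * m b := by have := hpos a; have := hpos b; positivity
  rw [← ENNReal.ofReal_mul ht, ← ENNReal.ofReal_mul (mul_nonneg ht (hpos a))]
  exact measure_le_le_of_measure_gt_eq_exp (hmeasξ _ _) hnn
    (hlawξ _ _ (min_lt_max.2 hab) _ hnn)

lemma measure_struck_le (hpos : ∀ i, 0 ≤ m i) (hlam : 0 ≤ lam) (ht : 0 ≤ t)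
    (hmeasl : ∀ i, Measurable (lv i))
    (hlawl : ∀ i, ∀ s : ℝ, 0 ≤ s →
      μ {ω | s < lv i ω} = ENNReal.ofReal (Real.exp (-(lam * s))))
    (i : ℕ) :
    μ {ω | lv i ω ≤ t * m i} ≤ ENNReal.ofReal (lam * t) * ENNReal.ofReal (m i) := by
  have hnn : 0 ≤ t * m i := mul_nonneg ht (hpos i)
  rw [← ENNReal.ofReal_mul (mul_nonneg hlam ht), mul_assoc]
  exact measure_le_le_of_measure_gt_eq_exp (hmeasl i) (mul_nonneg hlam hnn) (hlawl i _ hnn)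

lemma measure_path_struck_le (hpos : ∀ i, 0 ≤ m i) (hlam : 0 ≤ lam) (ht : 0 ≤ t)
    (hmeasξ : ∀ i j, Measurable (ξ i j)) (hmeasl : ∀ i, Measurable (lv i))
    (hlawξ : ∀ i j, i < j → ∀ s : ℝ, 0 ≤ s →
      μ {ω | s < ξ i j ω} = ENNReal.ofReal (Real.exp (-s)))
    (hlawl : ∀ i, ∀ s : ℝ, 0 ≤ s →
      μ {ω | s < lv i ω} = ENNReal.ofReal (Real.exp (-(lam * s))))
    (hindep : iIndepFun
      (Sum.elim (fun p : {p : ℕ × ℕ // p.1 < p.2} => ξ p.1.1 p.1.2)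
        (fun i : ℕ => lv i)) μ)
    {n : ℕ} {v : Fin (n + 1) → ℕ} (hv : Function.Injective v) :
    μ {ω | (∀ l : Fin n, (expGraph ξ m t ω).Adj (v l.castSucc) (v l.succ)) ∧
        lv (v 0) ω ≤ t * m (v 0)} ≤
      ENNReal.ofReal (lam * t) * ENNReal.ofReal (m (v 0)) * pathWeight
        (fun a b => ENNReal.ofReal t * ENNReal.ofReal (m a) * ENNReal.ofReal (m b)) v := by
  set F := Sum.elim (fun p : {p : ℕ × ℕ // p.1 < p.2} => ξ p.1.1 p.1.2) (fun i : ℕ => lv i)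
  have hne (l : Fin n) : v l.castSucc ≠ v l.succ := hv.ne Fin.castSucc_lt_succ.ne
  let idx : Option (Fin n) → {p : ℕ × ℕ // p.1 < p.2} ⊕ ℕ
    | none => .inr (v 0)
    | some l => .inl ⟨(min (v l.castSucc) (v l.succ), max (v l.castSucc) (v l.succ)),
        min_lt_max.2 (hne l)⟩
  have hidx : Function.Injective idx := by
    rintro (_ | l) (_ | l') h <;> simp only [idx, reduceCtorEq, Sum.inl.injEq,
      Subtype.mk.injEq, Prod.mk.injEq] at h
    · rfl
    · have := hne l
      have h₁ := @hv (l.castSucc) l'.castSucc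
      have h₂ := @hv (l.castSucc) l'.succ
      have h₃ := @hv (l.succ) l'.castSucc
      have h₄ := @hv (l.succ) l'.succ
      simp only [Fin.ext_iff, Fin.val_castSucc, Fin.val_succ] at h₁ h₂ h₃ h₄
      have : (l : ℕ) = l' := by omega
      exact congrArg some (Fin.ext this)
  let thr : Option (Fin n) → Set ℝ := fun o =>
    Set.Iic (o.elim (t * m (v 0)) fun l => t * m (v l.castSucc) * m (v l.succ))
  have hprod := (hindep.precomp hidx).measure_inter_preimage_eq_mul Finset.univ
    (sets := thr) fun _ _ => measurableSet_Iic
  calc _ ≤ μ (⋂ o ∈ Finset.univ, F (idx o) ⁻¹' thr o) := by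
        refine measure_mono fun ω ⟨hadj, hstruck⟩ => ?_
        simp only [Set.mem_iInter]
        rintro (_ | l) -
        exacts [hstruck, (expGraph_adj_iff.1 (hadj l)).2]
    _ = μ {ω | lv (v 0) ω ≤ t * m (v 0)} * ∏ l : Fin n,
          μ {ω | ξ (min (v l.castSucc) (v l.succ)) (max (v l.castSucc) (v l.succ)) ω ≤
            t * m (v l.castSucc) * m (v l.succ)} := by
        rw [hprod, Fintype.prod_option]; rfl
    _ ≤ _ := mul_le_mul' (measure_struck_le hpos hlam ht hmeasl hlawl _)
          (Finset.prod_le_prod' fun l _ => measure_edge_le hpos ht hmeasξ hlawξ (hne l))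

lemma measure_reachable_struck_le (hpos : ∀ i, 0 ≤ m i) (hlam : 0 ≤ lam) (ht : 0 ≤ t)
    (hmeasξ : ∀ i j, Measurable (ξ i j)) (hmeasl : ∀ i, Measurable (lv i))
    (hlawξ : ∀ i j, i < j → ∀ s : ℝ, 0 ≤ s →
      μ {ω | s < ξ i j ω} = ENNReal.ofReal (Real.exp (-s)))
    (hlawl : ∀ i, ∀ s : ℝ, 0 ≤ s →
      μ {ω | s < lv i ω} = ENNReal.ofReal (Real.exp (-(lam * s))))
    (hindep : iIndepFun
      (Sum.elim (fun p : {p : ℕ × ℕ // p.1 < p.2} => ξ p.1.1 p.1.2)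
        (fun i : ℕ => lv i)) μ)
    {S : Set ℕ} {k : ℕ} (hk : k ∉ S) (i : ℕ) :
    μ {ω | (expGraph ξ m t ω).Reachable k i ∧ lv i ω ≤ t * m i} ≤
      ENNReal.ofReal (lam * t) * ENNReal.ofReal (m i) * ∑' n, exitPathSum S
        (fun a b => ENNReal.ofReal t * ENNReal.ofReal (m a) * ENNReal.ofReal (m b)) n i := by
  classical
  set w := fun a b => ENNReal.ofReal t * ENNReal.ofReal (m a) * ENNReal.ofReal (m b)
  set E : (n : ℕ) → (Fin n → ℕ) → Set Ω := fun n u =>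
    {ω | Function.Injective (Fin.cons i u : Fin (n + 1) → ℕ) ∧
      IsExitPath S (Fin.cons i u : Fin (n + 1) → ℕ) ∧
      (∀ l : Fin n, (expGraph ξ m t ω).Adj ((Fin.cons i u : Fin (n + 1) → ℕ) l.castSucc)
        ((Fin.cons i u : Fin (n + 1) → ℕ) l.succ)) ∧ lv i ω ≤ t * m i}
  have hcover : {ω | (expGraph ξ m t ω).Reachable k i ∧ lv i ω ≤ t * m i} ⊆ ⋃ (n) (u), E n u := by
    rintro ω ⟨hreach, hstruck⟩
    obtain ⟨n, v, rfl, hv, hexit, hadj⟩ := hreach.symm.exists_exitPath hk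
    simp only [Set.mem_iUnion]
    exact ⟨n, Fin.tail v, by simpa [E] using ⟨hv, hexit, hadj, hstruck⟩⟩
  have hterm (n : ℕ) (u : Fin n → ℕ) : μ (E n u) ≤ ENNReal.ofReal (lam * t) * ENNReal.ofReal (m i) *
      if IsExitPath S (Fin.cons i u : Fin (n + 1) → ℕ) then pathWeight w (Fin.cons i u) else 0 := by
    by_cases hv : Function.Injective (Fin.cons i u : Fin (n + 1) → ℕ)
    · split_ifs with hexit
      · refine (measure_mono ?_).trans
          (measure_path_struck_le hpos hlam ht hmeasξ hmeasl hlawξ hlawl hindep hv)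
        exact fun ω hω => ⟨hω.2.2.1, hω.2.2.2⟩
      · simp [E, hexit]
    · simp [E, hv]
  calc _ ≤ ∑' (n) (u), μ (E n u) := (measure_mono hcover).trans <|
        (measure_iUnion_le _).trans <| ENNReal.tsum_le_tsum fun n => measure_iUnion_le _
    _ ≤ _ := by
        simp only [exitPathSum, ← ENNReal.tsum_mul_left]
        exact ENNReal.tsum_le_tsum fun n => ENNReal.tsum_le_tsum (hterm n)

lemma ae_finite_reachable_struck (hpos : ∀ i, 0 ≤ m i) (hm2 : Summable fun i => m i ^ 2)
    (hlam : 0 ≤ lam) (ht : 0 ≤ t)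
    (hmeasξ : ∀ i j, Measurable (ξ i j)) (hmeasl : ∀ i, Measurable (lv i))
    (hlawξ : ∀ i j, i < j → ∀ s : ℝ, 0 ≤ s →
      μ {ω | s < ξ i j ω} = ENNReal.ofReal (Real.exp (-s)))
    (hlawl : ∀ i, ∀ s : ℝ, 0 ≤ s →
      μ {ω | s < lv i ω} = ENNReal.ofReal (Real.exp (-(lam * s))))
    (hindep : iIndepFun
      (Sum.elim (fun p : {p : ℕ × ℕ // p.1 < p.2} => ξ p.1.1 p.1.2)
        (fun i : ℕ => lv i)) μ)
    (k : ℕ) :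
    ∀ᵐ ω ∂μ, {i | (expGraph ξ m t ω).Reachable k i ∧ lv i ω ≤ t * m i}.Finite := by
  set e := fun i => ENNReal.ofReal (m i)
  have he : ∑' i, e i ^ 2 ≠ ∞ := by
    simp only [e, ← ENNReal.ofReal_pow (hpos _)]
    rw [← ENNReal.ofReal_tsum_of_nonneg (fun i => sq_nonneg _) hm2]
    exact ENNReal.ofReal_ne_top
  -- outside `s` the weight of exit paths decays geometrically in their length
  obtain ⟨s, hks, hD⟩ := exists_finset_mul_tsum_compl_lt he ENNReal.ofReal_ne_top
    (ε := 2⁻¹) (by simp) {k}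
  set C := ENNReal.ofReal (lam * t) * (2 * (ENNReal.ofReal t * ∑ x ∈ s, e x))
  have hbound (i : ℕ) : μ {ω | (expGraph ξ m t ω).Reachable k i ∧ lv i ω ≤ t * m i} ≤
      (↑s : Set ℕ).indicator 1 i + C * e i ^ 2 := by
    by_cases hi : i ∈ s
    · simpa [hi] using prob_le_one.trans le_self_add
    · refine (measure_reachable_struck_le hpos hlam ht hmeasξ hmeasl hlawξ hlawl hindep
        (S := (↑s)ᶜ) (by simpa using hks) i).trans ?_
      have := tsum_exitPathSum_rankOne_le hD.le (Finset.mem_coe.not.2 hi)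
      rw [compl_compl, ← sum_eq_tsum_indicator] at this
      rw [Set.indicator_of_notMem (Finset.mem_coe.not.2 hi), zero_add]
      calc _ ≤ ENNReal.ofReal (lam * t) * e i * (2 * (ENNReal.ofReal t * ∑ x ∈ s, e x) * e i) := by
            gcongr
        _ = C * e i ^ 2 := by ring
  have hsum : ∑' i, μ {ω | (expGraph ξ m t ω).Reachable k i ∧ lv i ω ≤ t * m i} ≠ ∞ := by
    refine ne_top_of_le_ne_top ?_ (ENNReal.tsum_le_tsum hbound)
    rw [ENNReal.tsum_add, ENNReal.tsum_mul_left, ← sum_eq_tsum_indicator]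
    exact ENNReal.add_ne_top.2 ⟨by simp, ENNReal.mul_ne_top (by simp [C, e, ENNReal.mul_eq_top]) he⟩
  filter_upwards [ae_eventually_notMem hsum] with ω hω
  rw [← Nat.cofinite_eq_atTop] at hω
  simpa using hω

end Model

theorem stmt11_general {Ω : Type*} [MeasurableSpace Ω] (μ : Measure Ω) [IsProbabilityMeasure μ]
    (m : ℕ → ℝ) (hpos : ∀ i, 0 ≤ m i)
    (hm2 : Summable fun i => m i ^ 2)
    (lam : ℝ) (hlam : 0 < lam)
    (ξ : ℕ → ℕ → Ω → ℝ) (hmeasξ : ∀ i j, Measurable (ξ i j))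
    (lv : ℕ → Ω → ℝ) (hmeasl : ∀ i, Measurable (lv i))
    (hlawξ : ∀ i j, i < j → ∀ s : ℝ, 0 ≤ s →
      μ {ω | s < ξ i j ω} = ENNReal.ofReal (Real.exp (-s)))
    (hlawl : ∀ i, ∀ s : ℝ, 0 ≤ s →
      μ {ω | s < lv i ω} = ENNReal.ofReal (Real.exp (-(lam * s))))
    (hindep : iIndepFun
      (Sum.elim (fun p : {p : ℕ × ℕ // p.1 < p.2} => ξ p.1.1 p.1.2)
        (fun i : ℕ => lv i)) μ)
    (t : ℝ) (ht : 0 ≤ t) :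
    μ {ω | ∀ k : ℕ,
      {i : ℕ | (expGraph ξ m t ω).Reachable k i ∧ lv i ω ≤ t * m i}.Finite} = 1 := by
  have hall : ∀ᵐ ω ∂μ, ∀ k : ℕ,
      {i : ℕ | (expGraph ξ m t ω).Reachable k i ∧ lv i ω ≤ t * m i}.Finite :=
    ae_all_iff.2 <| ae_finite_reachable_struck hpos hm2 hlam.le ht hmeasξ hmeasl hlawξ hlawl hindep
  exact (measure_congr (ae_eq_univ.2 (ae_iff.1 hall))).trans measure_univ

/-- For every `t ≥ 0`, almost surely every connected component of `G_t` contains only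
finitely many vertices `i` with `λ_i ≤ t m_i` (finitely many lightnings per component). -/
theorem stmt11 {Ω : Type*} [MeasurableSpace Ω] (μ : Measure Ω) [IsProbabilityMeasure μ]
    (m : ℕ → ℝ) (hmono : Antitone m) (hpos : ∀ i, 0 ≤ m i)
    (hm2 : Summable fun i => m i ^ 2)
    (lam : ℝ) (hlam : 0 < lam)
    (ξ : ℕ → ℕ → Ω → ℝ) (hmeasξ : ∀ i j, Measurable (ξ i j))
    (lv : ℕ → Ω → ℝ) (hmeasl : ∀ i, Measurable (lv i))
    (hlawξ : ∀ i j, i < j → ∀ s : ℝ, 0 ≤ s →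
      μ {ω | s < ξ i j ω} = ENNReal.ofReal (Real.exp (-s)))
    (hlawl : ∀ i, ∀ s : ℝ, 0 ≤ s →
      μ {ω | s < lv i ω} = ENNReal.ofReal (Real.exp (-(lam * s))))
    (hindep : iIndepFun
      (Sum.elim (fun p : {p : ℕ × ℕ // p.1 < p.2} => ξ p.1.1 p.1.2)
        (fun i : ℕ => lv i)) μ)
    (t : ℝ) (ht : 0 ≤ t) :
    μ {ω | ∀ k : ℕ,
      {i : ℕ | (expGraph ξ m t ω).Reachable k i ∧ lv i ω ≤ t * m i}.Finite} = 1 :=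
  stmt11_general μ m hpos hm2 lam hlam ξ hmeasξ lv hmeasl hlawξ hlawl hindep t ht
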